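/- Let $A$ be a finite alphabet, $\gamma \in (0,1)$, and let $T : A^* \to \mathbb{N}$ be a visit-count function with $T(b) = 0$ implying $T(bc) = 0$ for any $c \in A$ (unvisited nodes have unvisited children). Define per-node values $u(b) \in [0,1]$ with $u(b) = 1$ whenever $T(b) = 0$, and for $a \in A^h$ set $U(a) = \sum_{t=1}^h \gamma^t u(a_{1:t}) + \frac{\gamma^{h+1}}{1-\gamma}$. Let $\pi(a)$ be the longest prefix of $a$ lying in $\mathcal{T} = \{b : T(b) > 0\} \cup \{\emptyset\}$. Then $U(a) = U(\pi(a))$ for all $a \in A^*$. -/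

import Mathlib

theorem stmt_16 {A : Type*} [Fintype A] (γ : ℝ) (hγ : γ ∈ Set.Ioo (0:ℝ) 1)
    (T : List A → ℕ) (hT0 : ∀ (b : List A) (c : A), T b = 0 → T (b ++ [c]) = 0)
    (u : List A → ℝ) (hu : ∀ b, u b ∈ Set.Icc (0:ℝ) 1)
    (hu1 : ∀ b, T b = 0 → u b = 1)
    (U : List A → ℝ)
    (hU : ∀ a : List A, U a =
      (∑ t ∈ Finset.Icc 1 a.length, γ ^ t * u (a.take t)) + γ ^ (a.length + 1) / (1 - γ)) :
    ∀ a p : List A,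
      (p <+: a ∧ (0 < T p ∨ p = []) ∧
        ∀ q : List A, q <+: a → 0 < T q → q.length ≤ p.length) →
      U a = U p := by
  obtain ⟨hγ0, hγ1⟩ := hγ
  have h1γ : (1 : ℝ) - γ ≠ 0 := by linarith
  have geom : ∀ m n : ℕ, m ≤ n →
      (∑ t ∈ Finset.Ioc m n, γ ^ t) + γ ^ (n + 1) / (1 - γ) = γ ^ (m + 1) / (1 - γ) := by
    intro m n hmn
    induction n, hmn using Nat.le_induction with
    | base => simp
    | succ n hmn ih =>
      rw [Finset.sum_Ioc_succ_top (by omega)]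
      have : γ ^ (n + 1) + γ ^ (n + 1 + 1) / (1 - γ) = γ ^ (n + 1) / (1 - γ) := by
        field_simp
        ring
      linarith
  rintro a p ⟨hpre, -, hmax⟩
  obtain ⟨s, rfl⟩ := hpre
  have hlen : p.length ≤ (p ++ s).length := by simp
  have htake : ∀ t ≤ p.length, (p ++ s).take t = p.take t := by
    intro t ht
    rw [List.take_append, Nat.sub_eq_zero_of_le ht, List.take_zero,
      List.append_nil]
  have hTz : ∀ t, p.length < t → t ≤ (p ++ s).length → T ((p ++ s).take t) = 0 := by
    intro t ht1 ht2
    by_contra h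
    have := hmax ((p ++ s).take t) (List.take_prefix t _) (Nat.pos_of_ne_zero h)
    rw [List.length_take] at this
    omega
  rw [hU, hU]
  have hsplit : Finset.Icc 1 (p ++ s).length = Finset.Ioc 0 (p ++ s).length := by
    exact Finset.Icc_add_one_left_eq_Ioc _ _
  have hsplit2 : Finset.Icc 1 p.length = Finset.Ioc 0 p.length := by
    exact Finset.Icc_add_one_left_eq_Ioc _ _
  rw [hsplit, hsplit2, ← Finset.sum_Ioc_consecutive _ (Nat.zero_le p.length) hlen]
  have h1 : ∑ t ∈ Finset.Ioc 0 p.length, γ ^ t * u ((p ++ s).take t)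
      = ∑ t ∈ Finset.Ioc 0 p.length, γ ^ t * u (p.take t) := by
    apply Finset.sum_congr rfl
    intro t ht
    rw [htake t (Finset.mem_Ioc.mp ht).2]
  have h2 : ∑ t ∈ Finset.Ioc p.length (p ++ s).length, γ ^ t * u ((p ++ s).take t)
      = ∑ t ∈ Finset.Ioc p.length (p ++ s).length, γ ^ t := by
    apply Finset.sum_congr rfl
    intro t ht
    obtain ⟨ht1, ht2⟩ := Finset.mem_Ioc.mp ht
    rw [hu1 _ (hTz t ht1 ht2), mul_one]
  rw [h1, h2]
  have := geom p.length (p ++ s).length hlen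
  linarith
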